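/- For every nested relational type T there is a monadic type U_{d(T)} (with d(U)=d(Unit)=0, d(Set(T))=1+d(T), d(T1×T2)=2+max(d(T1),d(T2))), an injection Convert_T from objects of type T to objects of type U_{d(T)}, and a function Convert⁻¹_T from objects of type U_{d(T)} to objects of type T, such that Convert⁻¹_T ∘ Convert_T is the identity on objects of type T. -/

import Mathlib

/-- Nested relational types. -/
inductive NType : Type
  | U : NType
  | unit : NType
  | prod : NType → NType → NType
  | set : NType → NType

/-- Objects of a nested relational type over a set `α` of Ur-elements. -/
def Obj (α : Type) : NType → Type
  | .U => α
  | .unit => Unit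
  | .prod a b => Obj α a × Obj α b
  | .set t => Set (Obj α t)

/-- Typed de Bruijn variables over a context of types. -/
inductive Var : List NType → NType → Type
  | zero {Γ t} : Var (t :: Γ) t
  | succ {Γ s t} : Var Γ t → Var (s :: Γ) t

/-- Environments: assignments of objects to all variables of a context. -/
def Env (α : Type) (Γ : List NType) : Type := ∀ t, Var Γ t → Obj α t

def Env.nil {α : Type} : Env α [] := fun _ v => nomatch v

def Env.cons {α : Type} {Γ : List NType} {t : NType} (x : Obj α t) (ρ : Env α Γ) :
    Env α (t :: Γ) := fun s v =>
  match v with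
  | .zero => x
  | .succ w => ρ s w

/-- Terms: variables, unit, tupling and projections. -/
inductive Tm : List NType → NType → Type
  | var {Γ t} : Var Γ t → Tm Γ t
  | unit {Γ} : Tm Γ .unit
  | pair {Γ a b} : Tm Γ a → Tm Γ b → Tm Γ (.prod a b)
  | fst {Γ a b} : Tm Γ (.prod a b) → Tm Γ a
  | snd {Γ a b} : Tm Γ (.prod a b) → Tm Γ b

def Tm.eval {α : Type} {Γ : List NType} (ρ : Env α Γ) : ∀ {t}, Tm Γ t → Obj α t
  | _, .var v => ρ _ v
  | _, .unit => (() : Unit)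
  | _, .pair a b => ((Tm.eval ρ a, Tm.eval ρ b) : _ × _)
  | _, .fst (a := a) (b := b) p => (Tm.eval ρ p : Obj α a × Obj α b).1
  | _, .snd (a := a) (b := b) p => (Tm.eval ρ p : Obj α a × Obj α b).2

/-- Δ₀ formulas: (dis)equality of Ur-elements, ⊤, ⊥, ∧, ∨ and bounded quantifiers. -/
inductive Delta0 : List NType → Type
  | eqU {Γ} : Tm Γ .U → Tm Γ .U → Delta0 Γ
  | neU {Γ} : Tm Γ .U → Tm Γ .U → Delta0 Γ
  | tru {Γ} : Delta0 Γ
  | fls {Γ} : Delta0 Γ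
  | and {Γ} : Delta0 Γ → Delta0 Γ → Delta0 Γ
  | or {Γ} : Delta0 Γ → Delta0 Γ → Delta0 Γ
  | all {Γ t} : Tm Γ (.set t) → Delta0 (t :: Γ) → Delta0 Γ
  | ex {Γ t} : Tm Γ (.set t) → Delta0 (t :: Γ) → Delta0 Γ

/-- Satisfaction of a Δ₀ formula in an environment. -/
def Delta0.sat {α : Type} : ∀ {Γ}, Env α Γ → Delta0 Γ → Prop
  | _, ρ, .eqU a b => Tm.eval ρ a = Tm.eval ρ b
  | _, ρ, .neU a b => Tm.eval ρ a ≠ Tm.eval ρ b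
  | _, _, .tru => True
  | _, _, .fls => False
  | _, ρ, .and φ ψ => Delta0.sat ρ φ ∧ Delta0.sat ρ ψ
  | _, ρ, .or φ ψ => Delta0.sat ρ φ ∨ Delta0.sat ρ ψ
  | _, ρ, .all (t := T) s φ =>
      ∀ x : Obj _ T, x ∈ (show Set (Obj _ T) from Tm.eval ρ s) → Delta0.sat (Env.cons x ρ) φ
  | _, ρ, .ex (t := T) s φ =>
      ∃ x : Obj _ T, x ∈ (show Set (Obj _ T) from Tm.eval ρ s) ∧ Delta0.sat (Env.cons x ρ) φ

/-- Nested relational calculus expressions. -/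
inductive NRC : List NType → NType → Type
  | var {Γ t} : Var Γ t → NRC Γ t
  | unit {Γ} : NRC Γ .unit
  | pair {Γ a b} : NRC Γ a → NRC Γ b → NRC Γ (.prod a b)
  | fst {Γ a b} : NRC Γ (.prod a b) → NRC Γ a
  | snd {Γ a b} : NRC Γ (.prod a b) → NRC Γ b
  | sing {Γ t} : NRC Γ t → NRC Γ (.set t)
  | empty {Γ t} : NRC Γ (.set t)
  | union {Γ t} : NRC Γ (.set t) → NRC Γ (.set t) → NRC Γ (.set t)
  | diff {Γ t} : NRC Γ (.set t) → NRC Γ (.set t) → NRC Γ (.set t)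
  | bigUnion {Γ a b} : NRC (a :: Γ) (.set b) → NRC Γ (.set a) → NRC Γ (.set b)

/-- Semantics of NRC expressions. -/
def NRC.eval {α : Type} : ∀ {Γ}, Env α Γ → ∀ {t}, NRC Γ t → Obj α t
  | _, ρ, _, .var v => ρ _ v
  | _, _, _, .unit => (() : Unit)
  | _, ρ, _, .pair a b => ((NRC.eval ρ a, NRC.eval ρ b) : _ × _)
  | _, ρ, _, .fst (a := a) (b := b) p => (NRC.eval ρ p : Obj α a × Obj α b).1
  | _, ρ, _, .snd (a := a) (b := b) p => (NRC.eval ρ p : Obj α a × Obj α b).2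
  | _, ρ, _, .sing e => ({NRC.eval ρ e} : Set _)
  | _, _, _, .empty => (∅ : Set _)
  | _, ρ, _, .union e1 e2 => ((NRC.eval ρ e1 : Set _) ∪ (NRC.eval ρ e2 : Set _) : Set _)
  | _, ρ, _, .diff e1 e2 => ((NRC.eval ρ e1 : Set _) \ (NRC.eval ρ e2 : Set _) : Set _)
  | _, ρ, _, .bigUnion (a := a) (b := b) e2 e1 =>
      show Set (Obj α b) from
        ⋃ x ∈ (show Set (Obj α a) from NRC.eval ρ e1),
          (show Set (Obj α b) from NRC.eval (Env.cons x ρ) e2)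

/-- The Boolean type `Set(Unit)`. -/
abbrev NType.bool : NType := .set .unit
/-- Monadic types `U_0 = U`, `U_{n+1} = Set(U_n)`. -/
def MT : ℕ → NType
  | 0 => .U
  | n + 1 => .set (MT n)

/-- The iterated-singleton embedding `U_n → U_{n+k}`. -/
def upBy {α : Type} {n : ℕ} : ∀ k : ℕ, Obj α (MT n) → Obj α (MT (n + k))
  | 0, x => x
  | k + 1, x => (show Set (Obj α (MT (n + k))) from {upBy k x})

/-- The embedding `↑ : U_n → U_m` for `n ≤ m`. -/
def upTo {α : Type} {n : ℕ} (m : ℕ) (h : n ≤ m) (x : Obj α (MT n)) : Obj α (MT m) :=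
  cast (congrArg (fun k => Obj α (MT k)) (Nat.add_sub_cancel' h)) (upBy (m - n) x)

/-- Kuratowski-style pairing `Pair(a,b) = {{↑a}, {↑a, ↑b}}` on monadic types. -/
def kPair {α : Type} {n1 n2 : ℕ} (a : Obj α (MT n1)) (b : Obj α (MT n2)) :
    Obj α (MT (max n1 n2 + 2)) :=
  show Set (Set (Obj α (MT (max n1 n2)))) from
    { {upTo (max n1 n2) (le_max_left n1 n2) a},
      {upTo (max n1 n2) (le_max_left n1 n2) a, upTo (max n1 n2) (le_max_right n1 n2) b} }

/-- The monadic depth of a nested relational type. -/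
def mdepth : NType → ℕ
  | .U => 0
  | .unit => 0
  | .set t => 1 + mdepth t
  | .prod a b => 2 + max (mdepth a) (mdepth b)

/-!
`Convert_T` is injective by induction on `T`: the image map of an injection is injective,
iterated singletons are injective, and a Kuratowski pair determines its components. Since
`Obj α T` is nonempty, any injection out of it has a left inverse, which serves as `Convert⁻¹_T`.
-/

theorem kuratowski_pair_inj {β : Type*} {a b c d : β} :
    ({{a}, {a, b}} : Set (Set β)) = {{c}, {c, d}} ↔ a = c ∧ b = d := by
  refine ⟨fun h => ?_, fun ⟨rfl, rfl⟩ => rfl⟩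
  rcases Set.pair_eq_pair_iff.mp h with ⟨h₁, h₂⟩ | ⟨h₁, h₂⟩
  · obtain rfl := Set.singleton_injective h₁
    refine ⟨rfl, ?_⟩
    rcases Set.pair_eq_pair_iff.mp h₂ with ⟨-, hbd⟩ | ⟨had, hba⟩
    exacts [hbd, hba.trans had]
  · -- `{a} = {c, d}` and `{a, b} = {c}` collapse all four points
    simp only [Set.ext_iff, Set.mem_insert_iff, Set.mem_singleton_iff] at h₁ h₂
    have hac : a = c := (h₂ a).mp (.inl rfl)
    exact ⟨hac, ((h₂ b).mp (.inr rfl)).trans (hac.symm.trans ((h₁ d).mpr (.inr rfl)).symm)⟩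

section

variable {α : Type}

theorem upBy_injective {n : ℕ} : ∀ k, Function.Injective (upBy (α := α) (n := n) k)
  | 0 => fun _ _ h => h
  | k + 1 => fun _ _ h => upBy_injective k (Set.singleton_injective h)

theorem upTo_injective {n : ℕ} (m : ℕ) (h : n ≤ m) :
    Function.Injective (upTo (α := α) (n := n) m h) :=
  fun _ _ hxy => upBy_injective _ (cast_inj _ |>.mp hxy)

theorem kPair_inj {n₁ n₂ : ℕ} {a a' : Obj α (MT n₁)} {b b' : Obj α (MT n₂)} :
    kPair a b = kPair a' b' ↔ a = a' ∧ b = b' := by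
  refine ⟨fun h => ?_, fun ⟨rfl, rfl⟩ => rfl⟩
  obtain ⟨ha, hb⟩ := kuratowski_pair_inj.mp h
  exact ⟨upTo_injective _ _ ha, upTo_injective _ _ hb⟩

def Obj.castMT {n m : ℕ} (h : n = m) : Obj α (MT n) ≃ Obj α (MT m) :=
  Equiv.cast (congrArg (fun k => Obj α (MT k)) h)

def Obj.default [Inhabited α] : ∀ T : NType, Obj α T
  | .U => (Inhabited.default : α)
  | .unit => ()
  | .prod a b => (Obj.default a, Obj.default b)
  | .set _ => (∅ : Set _)

instance [Inhabited α] (T : NType) : Inhabited (Obj α T) := ⟨Obj.default T⟩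

/-- The paper's `Convert_T`; `default : α` plays the role of `c0`. -/
def encodeMonadic [Inhabited α] : ∀ T : NType, Obj α T → Obj α (MT (mdepth T))
  | .U => id
  | .unit => fun _ => (Inhabited.default : α)
  | .set t => fun s =>
      Obj.castMT (Nat.add_comm _ _) (show Obj α (MT (mdepth t + 1)) from encodeMonadic t '' s)
  | .prod a b => fun x =>
      Obj.castMT (Nat.add_comm _ _) (kPair (encodeMonadic a x.1) (encodeMonadic b x.2))

theorem encodeMonadic_injective [Inhabited α] :
    ∀ T : NType, Function.Injective (encodeMonadic (α := α) T)
  | .U => fun _ _ h => h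
  | .unit => fun _ _ _ => rfl
  | .set t => fun _ _ h =>
      (Set.image_injective.mpr (encodeMonadic_injective t)) ((Obj.castMT _).injective h)
  | .prod a b => fun _ _ h => by
      obtain ⟨h₁, h₂⟩ := kPair_inj.mp ((Obj.castMT _).injective h)
      exact Prod.ext (encodeMonadic_injective a h₁) (encodeMonadic_injective b h₂)

end

/-- For every nested relational type `T` there is a monadic type
`U_{d(T)}` (with `d(U)=d(Unit)=0`, `d(Set T)=1+d(T)`, `d(T1×T2)=2+max(d T1, d T2)`), an
injection `Convert_T` from objects of type `T` to objects of type `U_{d(T)}`, and a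
function `Convert⁻¹_T` in the other direction, with `Convert⁻¹_T ∘ Convert_T = id`. -/
theorem monadic_encoding (α : Type) [Inhabited α] (T : NType) :
    ∃ (conv : Obj α T → Obj α (MT (mdepth T)))
      (conv' : Obj α (MT (mdepth T)) → Obj α T),
      Function.Injective conv ∧ ∀ x : Obj α T, conv' (conv x) = x :=
  ⟨encodeMonadic T, Function.invFun (encodeMonadic T), encodeMonadic_injective T,
    Function.leftInverse_invFun (encodeMonadic_injective T)⟩
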